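/- Any two non-degenerate triangles contained in a plane integral point set have the same characteristic. Precisely: if P is a set of points in ℝ² with pairwise integer distances, and p,q,r and p',q',r' are two triples of non-collinear points of P, then the squarefree parts of 16·(area of triangle pqr)² and 16·(area of triangle p'q'r')² are equal. -/

import Mathlib

/-!
Write `D` for twice the signed area of a triangle. By Cauchy–Binet, `D(pqr) · D(p'q'r')` is the
Gram determinant `⟪u, u'⟫⟪v, v'⟫ - ⟪u, v'⟫⟪v, u'⟫` of the edge vectors `u = q - p`, `v = r - p`,
`u' = q' - p'`, `v' = r' - p'`, and by polarization `2⟪x - y, z - w⟫` is an integer combination of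
squared distances. In an integral point set `4 D(pqr) D(p'q'r')` is therefore an integer, so the
product of the two values of `16·area² = 4 D²` is a perfect square, and (taking both triangles
equal) each value is a natural number. Two natural numbers whose product is a square have the
same squarefree part.
-/

noncomputable def triArea (p q r : EuclideanSpace ℝ (Fin 2)) : ℝ :=
  |(q 0 - p 0) * (r 1 - p 1) - (q 1 - p 1) * (r 0 - p 0)| / 2

open RealInnerProductSpace

theorem Squarefree.dvd_of_mul_eq_sq {R : Type*} [CommMonoidWithZero R] [IsCancelMulZero R]
    [DecompositionMonoid R] {a b u : R} (ha : Squarefree a) (h : a * b = u ^ 2) : a ∣ b := by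
  nontriviality R
  obtain ⟨t, rfl⟩ := (ha.dvd_pow_iff_dvd two_ne_zero).1 ⟨b, h.symm⟩
  refine ⟨t ^ 2, mul_left_cancel₀ ha.ne_zero ?_⟩
  rw [h, mul_pow, sq a, mul_assoc]

theorem Nat.exists_squarefree_of_mul_eq_sq {M N w : ℕ} (h : M * N = w ^ 2) :
    ∃ k, Squarefree k ∧ (∃ m, M = k * m ^ 2) ∧ ∃ m, N = k * m ^ 2 := by
  obtain ⟨a, b, rfl, ha⟩ := Nat.sq_mul_squarefree M
  obtain ⟨c, d, rfl, hc⟩ := Nat.sq_mul_squarefree N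
  rcases eq_or_ne b 0 with rfl | hb
  · exact ⟨c, hc, ⟨0, by simp⟩, d, by ring⟩
  rcases eq_or_ne d 0 with rfl | hd
  · exact ⟨a, ha, ⟨b, by ring⟩, 0, by simp⟩
  obtain ⟨u, rfl⟩ : b * d ∣ w := by
    rw [← Nat.pow_dvd_pow_iff two_ne_zero, ← h]
    exact ⟨a * c, by ring⟩
  have hac : a * c = u ^ 2 := by
    refine mul_left_cancel₀ (pow_ne_zero 2 (mul_ne_zero hb hd)) ?_
    calc (b * d) ^ 2 * (a * c) = b ^ 2 * a * (d ^ 2 * c) := by ring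
      _ = (b * d * u) ^ 2 := h
      _ = (b * d) ^ 2 * u ^ 2 := by ring
  obtain rfl : a = c := Nat.dvd_antisymm (ha.dvd_of_mul_eq_sq hac)
    (hc.dvd_of_mul_eq_sq (by rw [mul_comm, hac]))
  exact ⟨a, ha, ⟨b, by ring⟩, d, by ring⟩

def IsIntegralPointSet {X : Type*} [PseudoMetricSpace X] (S : Set X) : Prop :=
  ∀ p ∈ S, ∀ q ∈ S, ∃ n : ℕ, dist p q = n

section InnerProductSpace

variable {E : Type*} [NormedAddCommGroup E] [InnerProductSpace ℝ E]

theorem two_mul_inner_sub_sub (x y z w : E) :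
    2 * ⟪x - y, z - w⟫ = dist x w ^ 2 + dist y z ^ 2 - dist x z ^ 2 - dist y w ^ 2 := by
  simp only [dist_eq_norm, ← real_inner_self_eq_norm_sq, inner_sub_left, inner_sub_right,
    real_inner_comm]
  ring

theorem IsIntegralPointSet.exists_int_two_mul_inner_sub_sub {S : Set E}
    (hS : IsIntegralPointSet S) {x y z w : E} (hx : x ∈ S) (hy : y ∈ S) (hz : z ∈ S)
    (hw : w ∈ S) : ∃ n : ℤ, 2 * ⟪x - y, z - w⟫ = n := by
  obtain ⟨a, ha⟩ := hS x hx w hw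
  obtain ⟨b, hb⟩ := hS y hy z hz
  obtain ⟨c, hc⟩ := hS x hx z hz
  obtain ⟨d, hd⟩ := hS y hy w hw
  refine ⟨a ^ 2 + b ^ 2 - c ^ 2 - d ^ 2, ?_⟩
  rw [two_mul_inner_sub_sub, ha, hb, hc, hd]
  push_cast
  ring

end InnerProductSpace

section Plane

local notation "ℝ²" => EuclideanSpace ℝ (Fin 2)

def det2 (u v : ℝ²) : ℝ := u 0 * v 1 - u 1 * v 0

theorem det2_mul_det2 (u v u' v' : ℝ²) :
    det2 u v * det2 u' v' = ⟪u, u'⟫ * ⟪v, v'⟫ - ⟪u, v'⟫ * ⟪v, u'⟫ := by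
  simp only [det2, PiLp.inner_apply, Fin.sum_univ_two, RCLike.inner_apply, conj_trivial]
  ring

theorem sixteen_mul_triArea_sq (p q r : ℝ²) :
    16 * triArea p q r ^ 2 = 4 * det2 (q - p) (r - p) ^ 2 := by
  simp only [triArea, det2, PiLp.sub_apply, div_pow, sq_abs]
  ring

variable {S : Set ℝ²} (hS : IsIntegralPointSet S) {p q r p' q' r' : ℝ²}
  (hp : p ∈ S) (hq : q ∈ S) (hr : r ∈ S)
include hS hp hq hr

theorem IsIntegralPointSet.exists_nat_triArea_mul_eq_sq (hp' : p' ∈ S) (hq' : q' ∈ S)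
    (hr' : r' ∈ S) :
    ∃ w : ℕ, (16 * triArea p q r ^ 2) * (16 * triArea p' q' r' ^ 2) = w ^ 2 := by
  obtain ⟨a, ha⟩ := hS.exists_int_two_mul_inner_sub_sub hq hp hq' hp'
  obtain ⟨b, hb⟩ := hS.exists_int_two_mul_inner_sub_sub hr hp hr' hp'
  obtain ⟨c, hc⟩ := hS.exists_int_two_mul_inner_sub_sub hq hp hr' hp'
  obtain ⟨d, hd⟩ := hS.exists_int_two_mul_inner_sub_sub hr hp hq' hp'
  refine ⟨(a * b - c * d).natAbs, ?_⟩
  rw [sixteen_mul_triArea_sq, sixteen_mul_triArea_sq, Nat.cast_natAbs, Int.cast_abs, sq_abs]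
  push_cast
  rw [← ha, ← hb, ← hc, ← hd]
  calc _ = (4 * (det2 (q - p) (r - p) * det2 (q' - p') (r' - p'))) ^ 2 := by ring
    _ = _ := by rw [det2_mul_det2]; ring

theorem IsIntegralPointSet.exists_nat_eq_sixteen_mul_triArea_sq :
    ∃ N : ℕ, 16 * triArea p q r ^ 2 = N := by
  obtain ⟨w, hw⟩ := hS.exists_nat_triArea_mul_eq_sq hp hq hr hp hq hr
  exact ⟨w, (pow_left_inj₀ (by positivity) w.cast_nonneg two_ne_zero).1 (by rw [sq, hw])⟩

end Plane

theorem characteristic_eq_of_integral_point_set_general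
    (S : Set (EuclideanSpace ℝ (Fin 2)))
    (hint : ∀ p ∈ S, ∀ q ∈ S, ∃ n : ℕ, dist p q = n)
    (p q r p' q' r' : EuclideanSpace ℝ (Fin 2))
    (hp : p ∈ S) (hq : q ∈ S) (hr : r ∈ S)
    (hp' : p' ∈ S) (hq' : q' ∈ S) (hr' : r' ∈ S) :
    ∃ k : ℕ, Squarefree k ∧
      (∃ m : ℕ, 16 * triArea p q r ^ 2 = (k : ℝ) * (m : ℝ) ^ 2) ∧
      (∃ m : ℕ, 16 * triArea p' q' r' ^ 2 = (k : ℝ) * (m : ℝ) ^ 2) := by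
  have hS : IsIntegralPointSet S := hint
  obtain ⟨M, hM⟩ := hS.exists_nat_eq_sixteen_mul_triArea_sq hp hq hr
  obtain ⟨N, hN⟩ := hS.exists_nat_eq_sixteen_mul_triArea_sq hp' hq' hr'
  obtain ⟨w, hw⟩ := hS.exists_nat_triArea_mul_eq_sq hp hq hr hp' hq' hr'
  rw [hM, hN] at hw ⊢
  obtain ⟨k, hk, ⟨m, rfl⟩, m', rfl⟩ :=
    Nat.exists_squarefree_of_mul_eq_sq (w := w) (by exact_mod_cast hw)
  exact ⟨k, hk, ⟨m, by push_cast; rfl⟩, m', by push_cast; rfl⟩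

/-- Any two non-degenerate triangles inside a plane integral point set have the same
characteristic, i.e. `16·area²` has the same squarefree part for both. -/
theorem characteristic_eq_of_integral_point_set
    (S : Set (EuclideanSpace ℝ (Fin 2)))
    (hint : ∀ p ∈ S, ∀ q ∈ S, ∃ n : ℕ, dist p q = n)
    (p q r p' q' r' : EuclideanSpace ℝ (Fin 2))
    (hp : p ∈ S) (hq : q ∈ S) (hr : r ∈ S)
    (hp' : p' ∈ S) (hq' : q' ∈ S) (hr' : r' ∈ S)
    (h1 : ¬ Collinear ℝ ({p, q, r} : Set (EuclideanSpace ℝ (Fin 2))))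
    (h2 : ¬ Collinear ℝ ({p', q', r'} : Set (EuclideanSpace ℝ (Fin 2)))) :
    ∃ k : ℕ, Squarefree k ∧
      (∃ m : ℕ, 16 * triArea p q r ^ 2 = (k : ℝ) * (m : ℝ) ^ 2) ∧
      (∃ m : ℕ, 16 * triArea p' q' r' ^ 2 = (k : ℝ) * (m : ℝ) ^ 2) :=
  characteristic_eq_of_integral_point_set_general S hint p q r p' q' r' hp hq hr hp' hq' hr'
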